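/- The map m: ℂ² → ℝ³ given by m(z,w) = (Re(zw), Im(zw), ½(|z|² − |w|²)) is S¹-invariant, and the induced map from the orbit space ℂ²/S¹ to ℝ³ is a homeomorphism. -/

import Mathlib

/-- The action of `e^{iθ} ∈ S¹` on `ℂ²`, `e^{iθ}·(z,w) = (e^{iθ}z, e^{−iθ}w)`. -/
noncomputable def circleAct (θ : ℝ) (p : ℂ × ℂ) : ℂ × ℂ :=
  (Complex.exp (θ * Complex.I) * p.1, Complex.exp (-θ * Complex.I) * p.2)

/-- The orbit equivalence relation of the `S¹`-action on `ℂ²`. -/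
noncomputable def circleSetoid : Setoid (ℂ × ℂ) where
  r p q := ∃ θ : ℝ, q = circleAct θ p
  iseqv := by
    constructor
    · exact fun p => ⟨0, by simp [circleAct]⟩
    · rintro p q ⟨θ, rfl⟩
      refine ⟨-θ, ?_⟩
      refine Prod.ext ?_ ?_ <;>
        · simp only [circleAct, ← mul_assoc, ← Complex.exp_add]
          push_cast
          ring_nf
          simp
    · rintro p q v ⟨θ, rfl⟩ ⟨θ', rfl⟩
      refine ⟨θ + θ', ?_⟩
      refine Prod.ext ?_ ?_ <;>
        · simp only [circleAct, ← mul_assoc, ← Complex.exp_add]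
          push_cast
          ring_nf


/-- The multi-moment map `m : ℂ² → ℝ³`, `m(z,w) = (Re(zw), Im(zw), ½(|z|² − |w|²))`. -/
noncomputable def mMap (p : ℂ × ℂ) : Fin 3 → ℝ :=
  ![(p.1 * p.2).re, (p.1 * p.2).im,
    (‖p.1‖ ^ 2 - ‖p.2‖ ^ 2) / 2]


/-!
The map `m` is continuous, surjective and proper, since `‖p‖² ≤ 4‖m p‖`; hence it is a closed
quotient map. Its fibres are exactly the `S¹`-orbits: `m(z, w)` determines `zw` and
`|z|² - |w|²`, hence also `|z|` and `|w|`, and two pairs with the same `zw`, `|z|`, `|w|` differ by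
`(e^{iθ}, e^{-iθ})` (read `θ` off the first coordinate, or off the second one if `z = 0`). So `m`
descends to a bijective quotient map `ℂ²/S¹ → ℝ³`, i.e. a homeomorphism.
-/

open Complex Filter Topology

theorem Topology.IsQuotientMap.exists_homeomorph_quotient {X Y : Type*} [TopologicalSpace X]
    [TopologicalSpace Y] {s : Setoid X} {g : X → Y} (hg : IsQuotientMap g)
    (hs : ∀ a b, s a b ↔ g a = g b) :
    ∃ h : Quotient s ≃ₜ Y, ∀ x, h (Quotient.mk s x) = g x := by
  let f : Quotient s → Y := Quotient.lift g fun a b hab => (hs a b).1 hab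
  have hf_quot : IsQuotientMap f :=
    hg.of_comp continuous_quot_mk (hg.continuous.quotient_lift _)
  have hf_inj : Function.Injective f :=
    Quotient.ind₂ fun a b hab => Quotient.sound ((hs a b).2 hab)
  exact ⟨(isHomeomorph_iff_isQuotientMap_injective.2 ⟨hf_quot, hf_inj⟩).homeomorph, fun _ => rfl⟩

theorem eq_and_eq_of_mul_eq_of_sub_eq {u v u' v' : ℝ} (hu : 0 ≤ u) (hv : 0 ≤ v) (hu' : 0 ≤ u')
    (hv' : 0 ≤ v') (hmul : u * v = u' * v') (hsub : u - v = u' - v') : u = u' ∧ v = v' := by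
  have hadd : u + v = u' + v' := (sq_eq_sq₀ (by positivity) (by positivity)).1 <|
    by linear_combination (u - v + u' - v') * hsub + 4 * hmul
  constructor <;> linarith

theorem exists_exp_mul_I_mul_eq {z z' : ℂ} (h : ‖z‖ = ‖z'‖) :
    ∃ θ : ℝ, z' = exp (θ * I) * z := by
  rcases eq_or_ne z 0 with rfl | hz
  · exact ⟨0, by simpa using h.symm⟩
  refine ⟨(z' / z).arg, ?_⟩
  have hnorm : ‖z' / z‖ = 1 := by rw [norm_div, ← h, div_self (norm_ne_zero_iff.2 hz)]
  have := norm_mul_exp_arg_mul_I (z' / z)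
  rw [hnorm, ofReal_one, one_mul] at this
  rw [this, div_mul_cancel₀ _ hz]

/- With `s = √(4‖ζ‖² + t²)`, the prescribed `‖z‖²` and `‖w‖²` are `(s ± t) / 2`, whose product is
`‖ζ‖²`; the phase of `ζ` is put on `w`. -/
theorem exists_mul_eq_and_norm_sq_sub_norm_sq_eq (ζ : ℂ) (t : ℝ) :
    ∃ z w : ℂ, z * w = ζ ∧ ‖z‖ ^ 2 - ‖w‖ ^ 2 = t := by
  set s := √(4 * ‖ζ‖ ^ 2 + t ^ 2)
  have hts : |t| ≤ s := Real.abs_le_sqrt (by nlinarith [sq_nonneg ‖ζ‖])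
  have hs_add : 0 ≤ s + t := by linarith [neg_abs_le t]
  have hs_sub : 0 ≤ s - t := by linarith [le_abs_self t]
  have hs_sq : s ^ 2 = 4 * ‖ζ‖ ^ 2 + t ^ 2 := Real.sq_sqrt (by positivity)
  refine ⟨(√((s + t) / 2) : ℂ), √((s - t) / 2) * exp (ζ.arg * I), ?_, ?_⟩
  · have hprod : √((s + t) / 2) * √((s - t) / 2) = ‖ζ‖ := by
      rw [← Real.sqrt_mul (by positivity), ← Real.sqrt_sq (norm_nonneg ζ)]
      congr 1
      linear_combination hs_sq / 4
    rw [← mul_assoc, ← ofReal_mul, hprod, norm_mul_exp_arg_mul_I]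
  · rw [norm_mul, norm_exp_ofReal_mul_I, mul_one, norm_real, norm_real, Real.norm_eq_abs,
      Real.norm_eq_abs, sq_abs, sq_abs, Real.sq_sqrt (by positivity), Real.sq_sqrt (by positivity)]
    ring

theorem sq_max_le_abs_sq_sub_sq_add_mul {a b : ℝ} (ha : 0 ≤ a) (hb : 0 ≤ b) :
    max a b ^ 2 ≤ |a ^ 2 - b ^ 2| + a * b := by
  rcases le_total a b with hab | hab
  · rw [max_eq_right hab, abs_of_nonpos (by nlinarith)]
    nlinarith
  · rw [max_eq_left hab, abs_of_nonneg (by nlinarith)]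
    nlinarith

theorem mMap_eq_mMap_iff {p q : ℂ × ℂ} :
    mMap p = mMap q ↔ p.1 * p.2 = q.1 * q.2 ∧ ‖p.1‖ = ‖q.1‖ ∧ ‖p.2‖ = ‖q.2‖ := by
  refine ⟨fun h => ?_, fun ⟨hprod, h₁, h₂⟩ => by simp only [mMap, hprod, h₁, h₂]⟩
  have hre := congrFun h 0
  have him := congrFun h 1
  have hdiff := congrFun h 2
  simp only [mMap, Matrix.cons_val_zero, Matrix.cons_val_one, Matrix.cons_val_two,
    Matrix.tail_cons, Matrix.head_cons] at hre him hdiff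
  have hprod : p.1 * p.2 = q.1 * q.2 := Complex.ext hre him
  have hnorm_prod : ‖p.1‖ ^ 2 * ‖p.2‖ ^ 2 = ‖q.1‖ ^ 2 * ‖q.2‖ ^ 2 := by
    rw [← mul_pow, ← mul_pow, ← norm_mul, ← norm_mul, hprod]
  obtain ⟨h₁, h₂⟩ := eq_and_eq_of_mul_eq_of_sub_eq (by positivity) (by positivity)
    (by positivity) (by positivity) hnorm_prod (by linarith)
  exact ⟨hprod, (sq_eq_sq₀ (norm_nonneg _) (norm_nonneg _)).1 h₁,
    (sq_eq_sq₀ (norm_nonneg _) (norm_nonneg _)).1 h₂⟩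

theorem exp_neg_mul_I_mul_exp_mul_I (θ : ℝ) : exp (-θ * I) * exp (θ * I) = 1 := by
  rw [← Complex.exp_add, neg_mul, neg_add_cancel, Complex.exp_zero]

theorem circleAct_fst_mul_snd (θ : ℝ) (p : ℂ × ℂ) :
    (circleAct θ p).1 * (circleAct θ p).2 = p.1 * p.2 := by
  simp only [circleAct]
  linear_combination p.1 * p.2 * exp_neg_mul_I_mul_exp_mul_I θ

theorem norm_circleAct_fst (θ : ℝ) (p : ℂ × ℂ) : ‖(circleAct θ p).1‖ = ‖p.1‖ := by
  simp [circleAct, norm_exp_ofReal_mul_I]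

theorem norm_circleAct_snd (θ : ℝ) (p : ℂ × ℂ) : ‖(circleAct θ p).2‖ = ‖p.2‖ := by
  simp only [circleAct]
  rw [norm_mul, ← ofReal_neg, norm_exp_ofReal_mul_I, one_mul]

theorem mMap_circleAct (θ : ℝ) (p : ℂ × ℂ) : mMap (circleAct θ p) = mMap p :=
  mMap_eq_mMap_iff.2 ⟨circleAct_fst_mul_snd θ p, norm_circleAct_fst θ p, norm_circleAct_snd θ p⟩

theorem exists_circleAct_eq {p q : ℂ × ℂ} (hprod : p.1 * p.2 = q.1 * q.2)
    (h₁ : ‖p.1‖ = ‖q.1‖) (h₂ : ‖p.2‖ = ‖q.2‖) : ∃ θ : ℝ, q = circleAct θ p := by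
  rcases eq_or_ne p.1 0 with hp₁ | hp₁
  · have hq₁ : q.1 = 0 := norm_eq_zero.1 (by rw [← h₁, hp₁, norm_zero])
    obtain ⟨φ, hφ⟩ := exists_exp_mul_I_mul_eq h₂
    exact ⟨-φ, Prod.ext (by simp [circleAct, hp₁, hq₁]) (by simp [circleAct, hφ])⟩
  · obtain ⟨θ, hθ⟩ := exists_exp_mul_I_mul_eq h₁
    refine ⟨θ, Prod.ext hθ ?_⟩
    have hq₂ : exp (θ * I) * q.2 = p.2 := by
      apply mul_left_cancel₀ hp₁
      linear_combination -hprod - q.2 * hθ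
    simp only [circleAct, ← hq₂, ← mul_assoc, exp_neg_mul_I_mul_exp_mul_I, one_mul]

theorem circleSetoid_iff_mMap_eq {p q : ℂ × ℂ} : circleSetoid p q ↔ mMap p = mMap q := by
  refine ⟨fun ⟨θ, hq⟩ => hq ▸ (mMap_circleAct θ p).symm, fun h => ?_⟩
  obtain ⟨hprod, h₁, h₂⟩ := mMap_eq_mMap_iff.1 h
  exact exists_circleAct_eq hprod h₁ h₂

theorem mMap_surjective : Function.Surjective mMap := by
  intro y
  obtain ⟨z, w, hzw, hnorm⟩ := exists_mul_eq_and_norm_sq_sub_norm_sq_eq ⟨y 0, y 1⟩ (2 * y 2)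
  refine ⟨(z, w), funext fun i => ?_⟩
  fin_cases i <;> simp [mMap, hzw, hnorm]

theorem mMap_continuous : Continuous mMap := by
  refine continuous_pi fun i => ?_
  fin_cases i <;> simp only [mMap] <;> fun_prop

theorem norm_sq_le_four_mul_norm_mMap (p : ℂ × ℂ) : ‖p‖ ^ 2 ≤ 4 * ‖mMap p‖ := by
  have hre : |(p.1 * p.2).re| ≤ ‖mMap p‖ := norm_le_pi_norm (mMap p) 0
  have him : |(p.1 * p.2).im| ≤ ‖mMap p‖ := norm_le_pi_norm (mMap p) 1
  have hdiff : |(‖p.1‖ ^ 2 - ‖p.2‖ ^ 2) / 2| ≤ ‖mMap p‖ := norm_le_pi_norm (mMap p) 2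
  rw [abs_div, abs_two] at hdiff
  calc ‖p‖ ^ 2 = max ‖p.1‖ ‖p.2‖ ^ 2 := by rw [Prod.norm_def]
    _ ≤ |‖p.1‖ ^ 2 - ‖p.2‖ ^ 2| + ‖p.1‖ * ‖p.2‖ :=
      sq_max_le_abs_sq_sub_sq_add_mul (norm_nonneg _) (norm_nonneg _)
    _ ≤ |‖p.1‖ ^ 2 - ‖p.2‖ ^ 2| + (|(p.1 * p.2).re| + |(p.1 * p.2).im|) := by
      rw [← norm_mul]; gcongr; exact norm_le_abs_re_add_abs_im _
    _ ≤ 4 * ‖mMap p‖ := by linarith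

theorem isProperMap_mMap : IsProperMap mMap := by
  refine isProperMap_iff_tendsto_cocompact.2 ⟨mMap_continuous, ?_⟩
  rw [← Metric.cobounded_eq_cocompact, ← Metric.cobounded_eq_cocompact,
    ← tendsto_norm_atTop_iff_cobounded]
  have hsq : Tendsto (fun p : ℂ × ℂ => ‖p‖ ^ 2 / 4) (Bornology.cobounded _) atTop :=
    ((tendsto_pow_atTop two_ne_zero).comp tendsto_norm_cobounded_atTop).atTop_div_const
      four_pos
  exact tendsto_atTop_mono (fun p => by linarith [norm_sq_le_four_mul_norm_mMap p]) hsq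

theorem m_invariant_and_induces_homeomorph :
    (∀ (θ : ℝ) (p : ℂ × ℂ), mMap (circleAct θ p) = mMap p) ∧
    ∃ h : Quotient circleSetoid ≃ₜ (Fin 3 → ℝ),
      ∀ p : ℂ × ℂ, h (Quotient.mk circleSetoid p) = mMap p := by
  refine ⟨mMap_circleAct, ?_⟩
  have hquot : IsQuotientMap mMap :=
    isProperMap_mMap.isClosedMap.isQuotientMap mMap_continuous mMap_surjective
  exact hquot.exists_homeomorph_quotient fun _ _ => circleSetoid_iff_mMap_eq
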